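/- Let G be a nilpotent group and g : ℕ → G a polynomial sequence such that G is generated by the set {g(n) : n ∈ ℕ}. Then for every infinite subset A ⊆ ℕ, the subgroup of G generated by {g(n) : n ∈ A} has finite index in G. -/

import Mathlib

/-!
In the abelianization, a polynomial sequence of degree `≤ d` has a Newton expansion
`g n = ∏_{i ≤ d} vᵢ ^ (n choose i)`. For `d + 1` points `aⱼ ∈ A` the binomial matrix
`(aⱼ choose i)` is a Vandermonde matrix up to a triangular change of basis, so its determinant
`E` is nonzero, and its adjugate expresses every `vᵢ ^ E` through the `g aⱼ`. Hence
`H = ⟨g a | a ∈ A⟩` satisfies `x ^ K ∈ H [G, G]` for every `x`. Walking down the lower central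
series with the identity `⁅a, b⁆ ^ (m * m) = ⁅a ^ m, b ^ m⁆` (valid when the commutators are
central) turns this into `x ^ m ∈ H` for every `x`. Finally `G` is finitely generated, since
`⟨range g⟩ = ⟨g 0, range (Δ g)⟩`, and a finitely generated nilpotent torsion group is finite
(by Schur, `[G, G]` is finite as soon as the centre has finite index); applied to `G` modulo the
normal core of `H`, this gives the finite index.
-/

namespace PaperPoly

/-- `DegLE d f` means that `f : S → G` is a polynomial map of degree at most `d ∈ ℕ`:
the base case `DegLE 0 f` means `f` is constant, and `DegLE (d+1) f` means that for every
`s : S` both difference maps `L_s f : t ↦ f (s+t) * (f t)⁻¹` and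
`R_s f : t ↦ (f t)⁻¹ * f (s+t)` satisfy `DegLE d`. -/
def DegLE {S : Type*} [AddCommSemigroup S] {G : Type*} [Group G] : ℕ → (S → G) → Prop
  | 0 => fun f => ∀ t t' : S, f t = f t'
  | d + 1 => fun f => ∀ s : S,
      DegLE d (fun t => f (s + t) * (f t)⁻¹) ∧ DegLE d (fun t => (f t)⁻¹ * f (s + t))

/-- `f` is a polynomial map (of some finite degree). -/
def IsPoly {S : Type*} [AddCommSemigroup S] {G : Type*} [Group G] (f : S → G) : Prop :=
  ∃ d : ℕ, DegLE d f

open Subgroup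
open scoped commutatorElement

section PolynomialMaps

open Set

variable {G G' : Type*} [Group G] [Group G']

theorem DegLE.map {S : Type*} [AddCommSemigroup S] (φ : G →* G') :
    ∀ {d : ℕ} {f : S → G}, DegLE d f → DegLE d (φ ∘ f)
  | 0, _, hf => fun t t' => congrArg φ (hf t t')
  | _ + 1, _, hf => fun s => by
    simpa only [Function.comp_def, map_mul, map_inv] using
      And.intro (DegLE.map φ (hf s).1) (DegLE.map φ (hf s).2)

def mulFwdDiff (f : ℕ → G) (n : ℕ) : G := f (1 + n) * (f n)⁻¹

theorem degLE_mulFwdDiff {d : ℕ} {f : ℕ → G} (hf : DegLE (d + 1) f) :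
    DegLE d (mulFwdDiff f) :=
  (hf 1).1

theorem mulFwdDiff_mul_self (f : ℕ → G) (n : ℕ) : mulFwdDiff f n * f n = f (n + 1) := by
  rw [mulFwdDiff, inv_mul_cancel_right, add_comm]

theorem closure_range_eq_zpowers_sup (f : ℕ → G) :
    closure (range f) = zpowers (f 0) ⊔ closure (range (mulFwdDiff f)) := by
  refine le_antisymm (closure_le _ |>.mpr ?_) (sup_le ?_ ?_)
  · rintro _ ⟨n, rfl⟩
    induction n with
    | zero => exact mem_sup_left (mem_zpowers _)
    | succ n ih =>
      rw [← mulFwdDiff_mul_self f n]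
      exact mul_mem (mem_sup_right (subset_closure ⟨n, rfl⟩)) ih
  · exact zpowers_le.mpr (subset_closure ⟨0, rfl⟩)
  · refine closure_le _ |>.mpr ?_
    rintro _ ⟨n, rfl⟩
    exact mul_mem (subset_closure ⟨1 + n, rfl⟩) (inv_mem (subset_closure ⟨n, rfl⟩))

theorem fg_zpowers (a : G) : (zpowers a).FG :=
  (fg_iff _).mpr ⟨{a}, (zpowers_eq_closure a).symm, finite_singleton a⟩

theorem DegLE.fg_closure_range : ∀ {d : ℕ} {f : ℕ → G}, DegLE d f → (closure (range f)).FG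
  | 0, f, hf => by
    rw [show f = fun _ => f 0 from funext fun n => hf n 0, range_const, ← zpowers_eq_closure]
    exact fg_zpowers _
  | _ + 1, f, hf => by
    rw [closure_range_eq_zpowers_sup]
    exact (fg_zpowers _).sup (degLE_mulFwdDiff hf).fg_closure_range

theorem DegLE.eq_prod_pow_choose {V : Type*} [CommGroup V] :
    ∀ {d : ℕ} {f : ℕ → V}, DegLE d f →
      ∀ n, f n = ∏ i : Fin (d + 1), (mulFwdDiff^[i] f 0) ^ n.choose i
  | 0, f, hf, n => by simp [hf n 0]
  | d + 1, f, hf, 0 => by simp [Fin.prod_univ_succ, Nat.choose_zero_succ]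
  | d + 1, f, hf, n + 1 => by
    rw [← mulFwdDiff_mul_self f n, (degLE_mulFwdDiff hf).eq_prod_pow_choose n,
      hf.eq_prod_pow_choose n]
    simp only [Fin.prod_univ_succ (n := d + 1), Fin.val_succ, Fin.val_zero, Nat.choose_succ_succ,
      pow_add, Finset.prod_mul_distrib, Nat.choose_zero_right, Function.iterate_succ_apply,
      Nat.succ_eq_add_one]
    ac_rfl

end PolynomialMaps

theorem zpow_det_mem_closure {V ι : Type*} [CommGroup V] [Fintype ι] [DecidableEq ι]
    (B : Matrix ι ι ℤ) (v : ι → V) (k : ι) :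
    v k ^ B.det ∈ closure (Set.range fun j => ∏ i, v i ^ B j i) := by
  have zpow_sum (a : V) (c : ι → ℤ) (s : Finset ι) : ∏ j ∈ s, a ^ c j = a ^ ∑ j ∈ s, c j := by
    induction s using Finset.cons_induction <;> simp_all [zpow_add]
  have hprod : ∏ j, (∏ i, v i ^ B j i) ^ B.adjugate k j = v k ^ B.det := by
    have hadj := congrFun (congrFun (Matrix.adjugate_mul B) k)
    simp only [Matrix.mul_apply, Matrix.smul_apply, Matrix.one_apply, smul_eq_mul, mul_ite,
      mul_one, mul_zero] at hadj
    simp_rw [← Finset.prod_zpow, ← zpow_mul, mul_comm (B _ _)]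
    rw [Finset.prod_comm]
    simp_rw [zpow_sum, hadj]
    simp
  rw [← hprod]
  exact Subgroup.prod_mem _ fun j _ => Subgroup.zpow_mem _ (subset_closure (Set.mem_range_self j)) _

theorem det_choose_ne_zero {n : ℕ} {e : Fin n → ℕ} (he : Function.Injective e) :
    (Matrix.of fun j i : Fin n => ((e j).choose i : ℤ)).det ≠ 0 := by
  have hV : (Matrix.vandermonde fun j => (e j : ℤ)).det ≠ 0 :=
    Matrix.det_vandermonde_ne_zero_iff.mpr (Nat.cast_injective.comp he)
  rw [Matrix.det_eval_matrixOfPolynomials_eq_det_vandermonde _ (fun i => descPochhammer ℤ i)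
    (fun i => descPochhammer_natDegree ℤ i) (fun i => monic_descPochhammer ℤ i)] at hV
  have hrow : Matrix.of (fun j i : Fin n => (descPochhammer ℤ i).eval (e j : ℤ)) =
      Matrix.of fun j i : Fin n => ((i : ℕ).factorial : ℤ) * ((e j).choose i : ℤ) := by
    ext j i
    simp [descPochhammer_eval_eq_descFactorial, Nat.descFactorial_eq_factorial_mul_choose]
  have hmul := Matrix.det_mul_row (fun i : Fin n => ((i : ℕ).factorial : ℤ))
    (Matrix.of fun j i : Fin n => ((e j).choose i : ℤ))
  simp only [Matrix.of_apply] at hmul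
  rw [hrow, hmul] at hV
  exact right_ne_zero_of_mul hV

theorem DegLE.exists_pow_mem_closure_image {V : Type*} [CommGroup V] {d : ℕ} {f : ℕ → V}
    (hf : DegLE d f) (hgen : closure (Set.range f) = ⊤) {A : Set ℕ} (hA : A.Infinite) :
    ∃ K : ℕ, 0 < K ∧ ∀ a : V, a ^ K ∈ closure (f '' A) := by
  let e : Fin (d + 1) → ℕ := fun j => hA.natEmbedding A j
  have he : Function.Injective e :=
    Subtype.val_injective.comp ((hA.natEmbedding A).injective.comp Fin.val_injective)
  let B : Matrix (Fin (d + 1)) (Fin (d + 1)) ℤ := Matrix.of fun j i => ((e j).choose i : ℤ)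
  let v : Fin (d + 1) → V := fun i => mulFwdDiff^[i] f 0
  have hfe : Set.range (fun j => ∏ i, v i ^ B j i) ⊆ f '' A := by
    rintro _ ⟨j, rfl⟩
    refine ⟨e j, (hA.natEmbedding A j).2, ?_⟩
    simp [hf.eq_prod_pow_choose, B, v]
  have hv (i : Fin (d + 1)) : v i ^ B.det.natAbs ∈ closure (f '' A) := by
    obtain ⟨c, hc⟩ : B.det ∣ B.det.natAbs := Int.dvd_natAbs.mpr dvd_rfl
    rw [← zpow_natCast, hc, zpow_mul]
    exact zpow_mem (closure_mono hfe (zpow_det_mem_closure B v i)) c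
  refine ⟨B.det.natAbs, Int.natAbs_pos.mpr (det_choose_ne_zero he), fun a => ?_⟩
  have hrange : closure (Set.range f) ≤ (closure (f '' A)).comap (powMonoidHom B.det.natAbs) := by
    rw [closure_le]
    rintro _ ⟨n, rfl⟩
    rw [SetLike.mem_coe, mem_comap, powMonoidHom_apply, hf.eq_prod_pow_choose n, ← Finset.prod_pow]
    exact Subgroup.prod_mem _ fun i _ => by
      rw [← pow_mul, mul_comm, pow_mul]; exact pow_mem (hv i) _
  exact hrange (hgen ▸ mem_top a)

theorem DegLE.exists_pow_mem_closure_image_sup_commutator {G : Type*} [Group G] {d : ℕ}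
    {g : ℕ → G} (hg : DegLE d g) (hgen : closure (Set.range g) = ⊤) {A : Set ℕ}
    (hA : A.Infinite) : ∃ K, 0 < K ∧ ∀ x : G, x ^ K ∈ closure (g '' A) ⊔ commutator G := by
  let φ : G →* Abelianization G := Abelianization.of
  have hφ : Function.Surjective φ := QuotientGroup.mk'_surjective _
  have hgen' : closure (Set.range (φ ∘ g)) = ⊤ := by
    rw [Set.range_comp, ← MonoidHom.map_closure, hgen, map_top_of_surjective φ hφ]
  obtain ⟨K, hK, hKmem⟩ := (hg.map φ).exists_pow_mem_closure_image hgen' hA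
  refine ⟨K, hK, fun x => ?_⟩
  rw [← Abelianization.ker_of, ← comap_map_eq, mem_comap, map_pow, MonoidHom.map_closure,
    ← Set.image_comp]
  exact hKmem (φ x)

section Nilpotent

variable {G : Type*} [Group G]

theorem commutatorElement_mul_mem_center {z w : G} (hz : z ∈ center G) (hw : w ∈ center G)
    (a b : G) : ⁅a * z, b * w⁆ = ⁅a, b⁆ := by
  have hz' (x : G) : ⁅z, x⁆ = 1 :=
    commutatorElement_eq_one_iff_commute.mpr (mem_center_iff.mp hz x).symm
  have hw' (x : G) : ⁅x, w⁆ = 1 :=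
    commutatorElement_eq_one_iff_commute.mpr (mem_center_iff.mp hw x)
  simp [commutatorElement_mul_left_eq_conj_mul, commutatorElement_mul_right_eq_mul_conj, hz', hw']

theorem commutatorElement_pow_right {a b : G} (h : ⁅a, b⁆ ∈ center G) (m : ℕ) :
    ⁅a, b ^ m⁆ = ⁅a, b⁆ ^ m := by
  induction m with
  | zero => simp
  | succ m ih =>
    rw [pow_succ, commutatorElement_mul_right_eq_mul_conj, ih, mul_assoc _ (b ^ m),
      mem_center_iff.mp h (b ^ m), ← mul_assoc, mul_inv_cancel_right, pow_succ]

theorem commutatorElement_pow_left {a b : G} (h : ⁅a, b⁆ ∈ center G) (m : ℕ) :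
    ⁅a ^ m, b⁆ = ⁅a, b⁆ ^ m := by
  have h' : ⁅b, a⁆ ∈ center G := by rw [← commutatorElement_inv]; exact inv_mem h
  rw [← commutatorElement_inv, commutatorElement_pow_right h', ← commutatorElement_inv, inv_pow,
    inv_inv]

theorem pow_mem_of_pow_mem_sup_commutator_le_center {L H : Subgroup G} [L.Normal]
    (hL : ⁅L, ⊤⁆ ≤ center G) {m : ℕ} (hm : ∀ x : G, x ^ m ∈ H ⊔ ⁅L, ⊤⁆) (x : G) :
    x ^ (m ^ 3) ∈ H := by
  have hdecomp (y : G) : ∃ u ∈ H, ∃ s ∈ ⁅L, (⊤ : Subgroup G)⁆, y ^ m = u * s := by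
    have hy := hm y
    rw [← SetLike.mem_coe, mul_normal] at hy
    obtain ⟨u, hu, s, hs, h⟩ := hy
    exact ⟨u, hu, s, hs, h.symm⟩
  have hcomm : ∀ a ∈ L, ∀ b : G, ⁅a, b⁆ ^ (m ^ 2) ∈ H := fun a ha b => by
    have hab := hL (commutator_mem_commutator ha (mem_top b))
    obtain ⟨u, hu, s, hs, hs'⟩ := hdecomp a
    obtain ⟨v, hv, t, ht, ht'⟩ := hdecomp b
    rw [sq, pow_mul, ← commutatorElement_pow_left hab, ← commutatorElement_pow_right, hs', ht',
      commutatorElement_mul_mem_center (hL hs) (hL ht), commutatorElement_def]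
    · exact mul_mem (mul_mem (mul_mem hu hv) (inv_mem hu)) (inv_mem hv)
    · exact hL (commutator_mem_commutator (pow_mem ha m) (mem_top b))
  have hcentral : ∀ s ∈ ⁅L, (⊤ : Subgroup G)⁆, s ^ (m ^ 2) ∈ H := fun s hs => by
    rw [Subgroup.commutator_def] at hs hL
    induction hs using closure_induction with
    | mem _ hx => obtain ⟨a, ha, b, -, rfl⟩ := hx; exact hcomm a ha b
    | one => simp [one_mem]
    | mul y z _ hz hyH hzH =>
      rw [(show Commute y z from mem_center_iff.mp (hL hz) y).mul_pow]
      exact mul_mem hyH hzH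
    | inv y hy hyH => rw [inv_pow]; exact inv_mem hyH
  obtain ⟨u, hu, s, hs, hxm⟩ := hdecomp x
  rw [pow_succ', pow_mul, hxm, (show Commute u s from mem_center_iff.mp (hL hs) u).mul_pow]
  exact mul_mem (pow_mem hu _) (hcentral s hs)

theorem pow_mem_sup_of_pow_mem_sup_commutator {L H N : Subgroup G} [L.Normal] [N.Normal]
    (hN : ⁅⁅L, (⊤ : Subgroup G)⁆, (⊤ : Subgroup G)⁆ ≤ N) {m : ℕ}
    (hm : ∀ x : G, x ^ m ∈ H ⊔ ⁅L, (⊤ : Subgroup G)⁆) (x : G) :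
    x ^ (m ^ 3) ∈ H ⊔ N := by
  let π := QuotientGroup.mk' N
  have hπ : Function.Surjective π := QuotientGroup.mk'_surjective N
  have : (L.map π).Normal := Normal.map inferInstance π hπ
  have hmap (K : Subgroup G) :
      ⁅K, (⊤ : Subgroup G)⁆.map π = ⁅K.map π, (⊤ : Subgroup (G ⧸ N))⁆ := by
    rw [map_commutator, map_top_of_surjective π hπ]
  have hcenter : ⁅L.map π, (⊤ : Subgroup (G ⧸ N))⁆ ≤ center (G ⧸ N) := by
    rw [← commutator_top_right_eq_bot_iff_le_center, ← hmap, ← hmap, Subgroup.map_eq_bot_iff,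
      QuotientGroup.ker_mk']
    exact hN
  have hmQ (y : G ⧸ N) : y ^ m ∈ H.map π ⊔ ⁅L.map π, (⊤ : Subgroup (G ⧸ N))⁆ := by
    obtain ⟨x, rfl⟩ := hπ y
    rw [← map_pow, ← hmap, ← Subgroup.map_sup]
    exact mem_map_of_mem π (hm x)
  have := pow_mem_of_pow_mem_sup_commutator_le_center hcenter hmQ (π x)
  rwa [← map_pow, ← mem_comap, comap_map_eq, QuotientGroup.ker_mk'] at this

theorem exists_pow_mem_sup_lowerCentralSeries {H : Subgroup G} {k : ℕ} (hk : 0 < k)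
    (h : ∀ x : G, x ^ k ∈ H ⊔ commutator G) :
    ∀ i, ∃ m, 0 < m ∧ ∀ x : G, x ^ m ∈ H ⊔ (⊤ : Subgroup G).lowerCentralSeries (i + 1)
  | 0 => ⟨k, hk, h⟩
  | i + 1 =>
    have ⟨m, hm, hmH⟩ := exists_pow_mem_sup_lowerCentralSeries hk h i
    ⟨m ^ 3, pow_pos hm 3, pow_mem_sup_of_pow_mem_sup_commutator le_rfl hmH⟩

theorem exists_pow_mem_of_pow_mem_sup_commutator [Group.IsNilpotent G] {H : Subgroup G} {k : ℕ}
    (hk : 0 < k) (h : ∀ x : G, x ^ k ∈ H ⊔ commutator G) : ∃ m, 0 < m ∧ ∀ x : G, x ^ m ∈ H := by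
  obtain ⟨n, hn⟩ := Subgroup.nilpotent_iff_lowerCentralSeries.mp ‹Group.IsNilpotent G›
  obtain ⟨m, hm, hmH⟩ := exists_pow_mem_sup_lowerCentralSeries hk h n
  have hbot : (⊤ : Subgroup G).lowerCentralSeries (n + 1) = ⊥ :=
    le_bot_iff.mp (hn ▸ Subgroup.lowerCentralSeries_antitone ⊤ n.le_succ)
  exact ⟨m, hm, fun x => by simpa only [hbot, sup_bot_eq] using hmH x⟩

theorem finite_commutatorSet_of_finite_quotient_center [Finite (G ⧸ center G)] :
    (commutatorSet G).Finite := by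
  refine (Set.finite_range fun p : (G ⧸ center G) × (G ⧸ center G) =>
    ⁅p.1.out, p.2.out⁆).subset ?_
  rintro _ ⟨a, b, rfl⟩
  obtain ⟨z, hz⟩ := QuotientGroup.mk_out_eq_mul (center G) a
  obtain ⟨w, hw⟩ := QuotientGroup.mk_out_eq_mul (center G) b
  exact ⟨(a, b), by simp only [hz, hw, commutatorElement_mul_mem_center z.2 w.2]⟩

theorem Group.IsNilpotent.finite_of_fg_isMulTorsion [Group.IsNilpotent G] [Group.FG G]
    (hG : IsMulTorsion G) : Finite G := by
  revert hG
  refine Group.nilpotent_center_quotient_ind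
    (P := fun G _ _ => ∀ [Group.FG G], IsMulTorsion G → Finite G) G
    (fun _ _ _ _ _ => Finite.of_subsingleton) fun G _ _ ih _ hG => ?_
  have : Finite (G ⧸ center G) := ih (hG.of_surjective (QuotientGroup.mk'_surjective _))
  -- by Schur's theorem (a Mathlib instance) this makes `commutator G` finite
  have : Finite (commutatorSet G) := finite_commutatorSet_of_finite_quotient_center.to_subtype
  have : Group.FG (Abelianization G) := QuotientGroup.fg _
  have : Finite (G ⧸ commutator G) := (CommGroup.finite_of_fg_isMulTorsion (Abelianization G)
    (hG.of_surjective (QuotientGroup.mk'_surjective _)) :)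
  exact Finite.of_subgroup_quotient (commutator G)

theorem finiteIndex_of_forall_pow_mem [Group.IsNilpotent G] [Group.FG G] {H : Subgroup G} {m : ℕ}
    (hm : 0 < m) (h : ∀ x : G, x ^ m ∈ H) : H.FiniteIndex := by
  have hcore (x : G) : x ^ m ∈ H.normalCore := fun b => by
    rw [← conj_pow]
    exact h _
  have : Finite (G ⧸ H.normalCore) := by
    refine Group.IsNilpotent.finite_of_fg_isMulTorsion fun y => ?_
    obtain ⟨x, rfl⟩ := QuotientGroup.mk_surjective y
    refine isOfFinOrder_iff_pow_eq_one.mpr ⟨m, hm, ?_⟩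
    rw [← QuotientGroup.mk_pow, QuotientGroup.eq_one_iff]
    exact hcore x
  have := finiteIndex_of_finite_quotient (H := H.normalCore)
  exact finiteIndex_of_le (normalCore_le H)

end Nilpotent

theorem infinite_subsequence_generates_finite_index {G : Type*} [Group G]
    [Group.IsNilpotent G] (g : ℕ → G) (hg : IsPoly g)
    (hgen : Subgroup.closure (Set.range g) = ⊤)
    (A : Set ℕ) (hA : A.Infinite) :
    (Subgroup.closure (g '' A)).FiniteIndex := by
  obtain ⟨d, hd⟩ := hg
  have : Group.FG G := by
    rw [Group.fg_def, ← hgen]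
    exact hd.fg_closure_range
  obtain ⟨K, hK, hKmem⟩ := hd.exists_pow_mem_closure_image_sup_commutator hgen hA
  obtain ⟨m, hm, hmH⟩ := exists_pow_mem_of_pow_mem_sup_commutator hK hKmem
  exact finiteIndex_of_forall_pow_mem hm hmH

end PaperPoly
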